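/- arXiv:math/0702416 — 12 statements merged into one kernel-verified Lean document; each statement's English description precedes it below -/
import Mathlib

section
/- Let M be an idempotent commutative monoid with order x ≤ y iff x+y=y, and e_{a,b} as above. For any endomorphism f of M and a, b, c, d ∈ M: e_{c,d} ∘ f ∘ e_{a,b} equals the zero endomorphism if f(b) ≤ c, and equals e_{a,d} otherwise. -/
open Classical in
/-- The map `e_{a,b}`: `e_{a,b}(x) = 0` if `x + a = a`, and `b` otherwise. -/
noncomputable def eab {M : Type} [AddCommMonoid M] (a b : M) : M → M :=
  fun x => if x + a = a then 0 else b

/-- For an idempotent commutative monoid `M`, an endomorphism `f` of `M`, and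
`a, b, c, d ∈ M`: `e_{c,d} ∘ f ∘ e_{a,b}` is the zero map if `f(b) ≤ c`
(i.e. `f b + c = c`), and equals `e_{a,d}` otherwise. -/
theorem eab_comp_eab {M : Type} [AddCommMonoid M] (idem : ∀ x : M, x + x = x)
    (f : M →+ M) (a b c d : M) :
    (f b + c = c → eab c d ∘ (⇑f) ∘ eab a b = fun _ : M => (0 : M)) ∧
    (f b + c ≠ c → eab c d ∘ (⇑f) ∘ eab a b = eab a d) := by
  constructor <;> intro h <;> funext x <;>
    by_cases hx : x + a = a <;>
    simp [Function.comp, eab, hx, h, map_zero]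
end

section
/- Let (M,+) be an idempotent commutative monoid with an absorbing element. Then any dense subsemiring R ⊆ End(M) is congruence-simple. In particular, End(M) itself is congruence-simple. -/
open Classical in
/-- The endomorphism `e_{a,b}` of an idempotent commutative monoid `M`:
`e_{a,b}(x) = 0` if `x + a = a`, and `b` otherwise. -/
noncomputable def Eab {M : Type} [AddCommMonoid M] (idem : ∀ x : M, x + x = x)
    (a b : M) : AddMonoid.End M where
  toFun x := if x + a = a then 0 else b
  map_zero' := by simp
  map_add' := by
    intro x y
    have key : ∀ u v : M, u + v + a = a → u + a = a := by
      intro u v h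
      have h2 : u + (u + v + a) = u + u + v + a := by ac_rfl
      rw [h, idem u, h] at h2
      exact h2
    by_cases hx : x + a = a <;> by_cases hy : y + a = a
    · have hxy : x + y + a = a := by rw [add_assoc, hy, hx]
      simp [hx, hy, hxy]
    · have hxy : ¬(x + y + a = a) := fun h => hy (key y x (by rw [add_comm y x]; exact h))
      simp [hx, hy, hxy]
    · have hxy : ¬(x + y + a = a) := fun h => hx (key x y h)
      simp [hx, hy, hxy]
    · have hxy : ¬(x + y + a = a) := fun h => hx (key x y h)
      simp [hx, hy, hxy, idem b]

/-- Let `M` be an idempotent commutative monoid with an absorbing element.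
Then any dense subsemiring `S ⊆ End M` (one containing all the `e_{a,b}`)
is congruence-simple.  (In particular `End M` itself is congruence-simple.) -/
theorem dense_subsemiring_congruenceSimple {M : Type} [AddCommMonoid M]
    (idem : ∀ x : M, x + x = x) (inf : M) (habs : ∀ x : M, x + inf = inf)
    (S : NonUnitalSubsemiring (AddMonoid.End M))
    (hdense : ∀ a b : M, Eab idem a b ∈ S) :
    ∀ c : RingCon S, (∀ x y : S, c x y → x = y) ∨ (∀ x y : S, c x y) := by
  classical
  intro c
  by_cases h : ∀ x y : S, c x y → x = y
  · exact Or.inl h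
  right
  push_neg at h
  obtain ⟨f, g, hc, hfg⟩ := h
  obtain ⟨x, hxne⟩ : ∃ x : M, (f : AddMonoid.End M) x ≠ (g : AddMonoid.End M) x := by
    by_contra h'
    push_neg at h'
    exact hfg (Subtype.ext (AddMonoidHom.ext h'))
  have Eab_apply : ∀ a b y : M, Eab idem a b y = if y + a = a then 0 else b :=
    fun a b y => rfl
  -- main step: from a related pair (p, q) with q x + p x ≠ p x,
  -- conclude 0 is related to every e_{a,b}
  have main : (g : AddMonoid.End M) x + (f : AddMonoid.End M) x ≠ (f : AddMonoid.End M) x →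
      ∀ a b : M, c 0 ⟨Eab idem a b, hdense a b⟩ := by
    intro hx a b
    set L : S := ⟨Eab idem ((f : AddMonoid.End M) x) b, hdense _ _⟩ with hL
    set E : S := ⟨Eab idem a x, hdense a x⟩ with hE
    have h1 : L * f * E = 0 := by
      apply Subtype.ext
      apply AddMonoidHom.ext
      intro y
      show Eab idem ((f : AddMonoid.End M) x) b
        ((f : AddMonoid.End M) (Eab idem a x y)) = 0
      by_cases hy : y + a = a
      · rw [Eab_apply a x y, if_pos hy, map_zero, Eab_apply, if_pos (zero_add _)]
      · rw [Eab_apply a x y, if_neg hy, Eab_apply, if_pos (idem _)]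
    have h2 : L * g * E = ⟨Eab idem a b, hdense a b⟩ := by
      apply Subtype.ext
      apply AddMonoidHom.ext
      intro y
      show Eab idem ((f : AddMonoid.End M) x) b
        ((g : AddMonoid.End M) (Eab idem a x y)) = Eab idem a b y
      by_cases hy : y + a = a
      · rw [Eab_apply a x y, if_pos hy, map_zero, Eab_apply, if_pos (zero_add _),
          Eab_apply, if_pos hy]
      · rw [Eab_apply a x y, if_neg hy, Eab_apply, if_neg hx, Eab_apply, if_neg hy]
    have := c.mul (c.mul (c.refl L) hc) (c.refl E)
    rw [h1, h2] at this
    exact this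
  have key : ∀ a b : M, c 0 ⟨Eab idem a b, hdense a b⟩ := by
    by_cases hx : (g : AddMonoid.End M) x + (f : AddMonoid.End M) x
        = (f : AddMonoid.End M) x
    · -- then f x + g x ≠ g x, use the symmetric pair
      have hx' : (f : AddMonoid.End M) x + (g : AddMonoid.End M) x
          ≠ (g : AddMonoid.End M) x := by
        intro h'
        apply hxne
        rw [← hx, add_comm, h']
      intro a b
      -- redo main with roles swapped
      set L : S := ⟨Eab idem ((g : AddMonoid.End M) x) b, hdense _ _⟩ with hL
      set E : S := ⟨Eab idem a x, hdense a x⟩ with hE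
      have h1 : L * g * E = 0 := by
        apply Subtype.ext
        apply AddMonoidHom.ext
        intro y
        show Eab idem ((g : AddMonoid.End M) x) b
          ((g : AddMonoid.End M) (Eab idem a x y)) = 0
        by_cases hy : y + a = a
        · rw [Eab_apply a x y, if_pos hy, map_zero, Eab_apply, if_pos (zero_add _)]
        · rw [Eab_apply a x y, if_neg hy, Eab_apply, if_pos (idem _)]
      have h2 : L * f * E = ⟨Eab idem a b, hdense a b⟩ := by
        apply Subtype.ext
        apply AddMonoidHom.ext
        intro y
        show Eab idem ((g : AddMonoid.End M) x) b
          ((f : AddMonoid.End M) (Eab idem a x y)) = Eab idem a b y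
        by_cases hy : y + a = a
        · rw [Eab_apply a x y, if_pos hy, map_zero, Eab_apply, if_pos (zero_add _),
            Eab_apply, if_pos hy]
        · rw [Eab_apply a x y, if_neg hy, Eab_apply, if_neg hx', Eab_apply, if_neg hy]
      have := c.mul (c.mul (c.refl L) (c.symm hc)) (c.refl E)
      rw [h1, h2] at this
      exact this
    · exact main hx
  -- everything is related to e_{0, inf}
  set e0 : S := ⟨Eab idem 0 inf, hdense 0 inf⟩ with he0
  have habs' : ∀ p : S, p + e0 = e0 := by
    intro p
    apply Subtype.ext
    apply AddMonoidHom.ext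
    intro y
    show (p : AddMonoid.End M) y + Eab idem 0 inf y = Eab idem 0 inf y
    by_cases hy : y + 0 = 0
    · have hy0 : y = 0 := by simpa using hy
      rw [hy0, Eab_apply, if_pos (zero_add 0), map_zero, add_zero]
    · rw [Eab_apply, if_neg hy, habs]
  have hall : ∀ p : S, c p e0 := by
    intro p
    have := c.add (c.refl p) (key 0 inf)
    rw [add_zero, habs' p] at this
    exact this
  intro u v
  exact c.trans (hall u) (c.symm (hall v))
end

section
/- Let R be a congruence-simple semiring which is not a ring (i.e., (R,+) is not a group). Then the addition on R is idempotent: x + x = x for all x ∈ R. -/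
section
variable {R : Type} [NonUnitalSemiring R]

private def myd (x y : R) : Prop := ∃ n : ℕ, ∃ a : R, n • x = y + a

private lemma myd_refl (x : R) : myd x x := ⟨1, 0, by simp⟩

private lemma myd_trans {x y z : R} (h1 : myd x y) (h2 : myd y z) : myd x z := by
  obtain ⟨n, a, ha⟩ := h1
  obtain ⟨m, b, hb⟩ := h2
  exact ⟨m * n, b + m • a, by rw [mul_smul, ha, smul_add, hb, add_assoc]⟩

private lemma myd_up {x y : R} (k : ℕ) (h : myd x y) :
    ∃ n : ℕ, k ≤ n ∧ ∃ a : R, n • x = y + a := by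
  obtain ⟨n, a, ha⟩ := h
  exact ⟨n + k, by omega, a + k • x, by rw [add_smul, ha, add_assoc]⟩

private lemma myd_add {x y u v : R} (h1 : myd x y) (h2 : myd u v) :
    myd (x + u) (y + v) := by
  obtain ⟨n, hn, a, ha⟩ := myd_up 0 h1
  obtain ⟨m, hm, b, hb⟩ := myd_up n h2
  obtain ⟨c, hc⟩ : ∃ c, m • x = y + c := by
    obtain ⟨k, hk⟩ := Nat.exists_eq_add_of_le hm
    exact ⟨a + k • x, by rw [hk, add_smul, ha, add_assoc]⟩
  refine ⟨m, c + b, ?_⟩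
  rw [smul_add, hc, hb]
  abel

private lemma myd_mul {x y u v : R} (h1 : myd x y) (h2 : myd u v) :
    myd (x * u) (y * v) := by
  obtain ⟨n, a, ha⟩ := h1
  obtain ⟨m, b, hb⟩ := h2
  refine ⟨n * m, y * b + a * v + a * b, ?_⟩
  have : (n * m) • (x * u) = (n • x) * (m • u) := (smul_mul_smul_comm n x m u).symm
  rw [this, ha, hb]
  simp only [add_mul, mul_add]; abel

private def myCon : RingCon R where
  r x y := myd x y ∧ myd y x
  iseqv := ⟨fun x => ⟨myd_refl x, myd_refl x⟩,
    fun h => ⟨h.2, h.1⟩,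
    fun h1 h2 => ⟨myd_trans h1.1 h2.1, myd_trans h2.2 h1.2⟩⟩
  add' h1 h2 := ⟨myd_add h1.1 h2.1, myd_add h1.2 h2.2⟩
  mul' h1 h2 := ⟨myd_mul h1.1 h2.1, myd_mul h1.2 h2.2⟩

end

/-- A congruence-simple semiring which is not a ring (its addition is not a
group) has idempotent addition. -/
theorem congruenceSimple_not_ring_idem_add {R : Type} [NonUnitalSemiring R]
    (hsimple : ∀ c : RingCon R, (∀ x y : R, c x y → x = y) ∨ (∀ x y : R, c x y))
    (hnotring : ¬ ∀ x : R, ∃ y : R, x + y = 0) :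
    ∀ x : R, x + x = x := by
  rcases hsimple (myCon (R := R)) with h | h
  · intro x
    refine (h (x + x) x ⟨⟨1, x, by simp [one_smul]⟩, ⟨2, 0, by simp [two_smul]⟩⟩).symm ▸ rfl
  · exfalso
    apply hnotring
    intro x
    obtain ⟨⟨n, a, ha⟩, _⟩ := h 0 x
    exact ⟨a, by simpa using ha.symm⟩
end

section
/- A congruence-simple semiring R with idempotent addition and trivial multiplication (xy = 0 for all x, y ∈ R) has at most 2 elements. -/
/-- A congruence-simple semiring with idempotent addition and trivial
multiplication (`x * y = 0` for all `x, y`) has at most two elements. -/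
theorem congruenceSimple_trivial_mul_card_le_two {R : Type} [NonUnitalSemiring R]
    (hsimple : ∀ c : RingCon R, (∀ x y : R, c x y → x = y) ∨ (∀ x y : R, c x y))
    (hidem : ∀ x : R, x + x = x)
    (htriv : ∀ x y : R, x * y = 0) :
    ∃ a b : R, ∀ x : R, x = a ∨ x = b := by
  -- every nonzero element is absorbing
  have habs : ∀ a : R, a ≠ 0 → ∀ x : R, x + a = a := by
    intro a ha
    set c : RingCon R :=
      { r := fun x y => x + a = y + a
        iseqv := ⟨fun _ => rfl, Eq.symm, Eq.trans⟩
        add' := by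
          intro x y z w h1 h2
          show (x + z) + a = (y + w) + a
          calc (x + z) + a = (x + a) + (z + a) := by
                rw [add_add_add_comm, hidem]
            _ = (y + a) + (w + a) := by rw [h1, h2]
            _ = (y + w) + a := by rw [add_add_add_comm, hidem]
        mul' := by
          intro x y z w _ _
          show x * z + a = y * w + a
          rw [htriv, htriv] } with hc
    have h0a : c 0 a := by
      show (0 : R) + a = a + a
      rw [zero_add, hidem]
    rcases hsimple c with h | h
    · exact absurd (h 0 a h0a) (Ne.symm ha)
    · intro x
      have := h x 0
      simpa [hc] using this
  rcases em (∃ a : R, a ≠ 0) with ⟨a, ha⟩ | h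
  · refine ⟨0, a, fun x => ?_⟩
    rcases em (x = 0) with h0 | h0
    · exact Or.inl h0
    · right
      have h1 := habs x h0 a
      have h2 := habs a ha x
      rw [add_comm] at h1
      exact h1.symm.trans h2
  · exact ⟨0, 0, fun x => Or.inl (by push_neg at h; exact h x)⟩
end

section
/- Let M be an irreducible semimodule over a semiring R, with representation T : R → End(M). Then the commuting semiring C(M) = {f ∈ End(M) : f ∘ T_r = T_r ∘ f for all r ∈ R} is a semifield: every nonzero element of C(M) is invertible. -/
/-!
A nonzero endomorphism `f` commuting with the action has an invariant range (a subsemimodule)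
and an invariant kernel congruence `f x = f y`. Over a semiring the zero set of `f` says nothing
about injectivity, which is why irreducibility must also exclude congruences. Since `f ≠ 0`, the
range is all of `M` and the kernel congruence is the identity, so `f` is bijective, hence a unit
of `End M`; the inverse of a unit commutes with everything the unit commutes with.
-/

namespace AddMonoid.End

variable {ι M : Type*} [AddCommMonoid M] {T : ι → AddMonoid.End M} {f : AddMonoid.End M}

theorem isUnit_of_bijective (hf : Function.Bijective f) : IsUnit f :=
  let e := AddEquiv.ofBijective (f : M →+ M) hf
  ⟨⟨f, e.symm.toAddMonoidHom, AddMonoidHom.ext e.apply_symm_apply,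
    AddMonoidHom.ext e.symm_apply_apply⟩, rfl⟩

theorem apply_apply_of_commute {g : AddMonoid.End M} (h : Commute f g) (x : M) :
    f (g x) = g (f x) :=
  DFunLike.congr_fun h x

theorem surjective_of_forall_commute
    (hsub : ∀ N : AddSubmonoid M, (∀ i, ∀ x ∈ N, T i x ∈ N) → N = ⊥ ∨ N = ⊤)
    (hf : ∀ i, Commute f (T i)) (hf0 : f ≠ 0) : Function.Surjective f := by
  have hinv : ∀ i, ∀ x ∈ AddMonoidHom.mrange (f : M →+ M),
      T i x ∈ AddMonoidHom.mrange (f : M →+ M) := by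
    rintro i _ ⟨y, rfl⟩
    exact ⟨T i y, apply_apply_of_commute (hf i) y⟩
  rcases hsub _ hinv with hbot | htop
  · refine absurd (AddMonoidHom.ext fun x => ?_) hf0
    have hx : f x ∈ AddMonoidHom.mrange (f : M →+ M) := ⟨x, rfl⟩
    rwa [hbot, AddSubmonoid.mem_bot] at hx
  · exact AddMonoidHom.mrange_eq_top.mp htop

theorem injective_of_forall_commute
    (hquot : ∀ c : AddCon M, (∀ i x y, c x y → c (T i x) (T i y)) →
      (∀ x y, c x y → x = y) ∨ ∀ x y, c x y)
    (hf : ∀ i, Commute f (T i)) (hf0 : f ≠ 0) : Function.Injective f := by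
  have hinv : ∀ i x y, AddCon.ker (f : M →+ M) x y →
      AddCon.ker (f : M →+ M) (T i x) (T i y) := by
    intro i x y (hxy : f x = f y)
    show f (T i x) = f (T i y)
    rw [apply_apply_of_commute (hf i) x, apply_apply_of_commute (hf i) y, hxy]
  rcases hquot _ hinv with hid | htotal
  · exact hid
  · refine absurd (AddMonoidHom.ext fun x => ?_) hf0
    exact ((AddCon.ker_rel _).mp (htotal x 0)).trans (map_zero f)

end AddMonoid.End

theorem schur_commuting_semifield_general {R M : Type} [NonUnitalSemiring R] [AddCommMonoid M]
    (T : R →ₙ+* AddMonoid.End M)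
    -- only trivial subsemimodules
    (hsub : ∀ N : AddSubmonoid M, (∀ (r : R), ∀ x ∈ N, T r x ∈ N) → N = ⊥ ∨ N = ⊤)
    -- only trivial semimodule congruences
    (hquot : ∀ c : AddCon M, (∀ (r : R) (x y : M), c x y → c (T r x) (T r y)) →
      (∀ x y : M, c x y → x = y) ∨ (∀ x y : M, c x y)) :
    ∀ f : AddMonoid.End M, (∀ r : R, f * T r = T r * f) → f ≠ 0 →
      ∃ g : AddMonoid.End M, (∀ r : R, g * T r = T r * g) ∧ f * g = 1 ∧ g * f = 1 := by
  intro f hf hf0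
  obtain ⟨u, rfl⟩ := AddMonoid.End.isUnit_of_bijective
    ⟨AddMonoid.End.injective_of_forall_commute hquot hf hf0,
      AddMonoid.End.surjective_of_forall_commute hsub hf hf0⟩
  exact ⟨↑u⁻¹, fun r => Commute.units_inv_left (hf r), u.mul_inv, u.inv_mul⟩

/-- Schur's lemma for semirings: if `M` is an irreducible semimodule over a
semiring `R` (given by a representation `T : R → End M`), then every nonzero
element of the commuting semiring
`C(M) = {f ∈ End M : f ∘ T r = T r ∘ f for all r}` is invertible in `C(M)`,
i.e. `C(M)` is a semifield. -/
theorem schur_commuting_semifield {R M : Type} [NonUnitalSemiring R] [AddCommMonoid M]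
    (T : R →ₙ+* AddMonoid.End M)
    -- `R M ≠ {0}`
    (hRM : ∃ (r : R) (x : M), T r x ≠ 0)
    -- only trivial subsemimodules
    (hsub : ∀ N : AddSubmonoid M, (∀ (r : R), ∀ x ∈ N, T r x ∈ N) → N = ⊥ ∨ N = ⊤)
    -- only trivial semimodule congruences
    (hquot : ∀ c : AddCon M, (∀ (r : R) (x y : M), c x y → c (T r x) (T r y)) →
      (∀ x y : M, c x y → x = y) ∨ (∀ x y : M, c x y)) :
    ∀ f : AddMonoid.End M, (∀ r : R, f * T r = T r * f) → f ≠ 0 →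
      ∃ g : AddMonoid.End M, (∀ r : R, g * T r = T r * g) ∧ f * g = 1 ∧ g * f = 1 :=
  schur_commuting_semifield_general T hsub hquot
end

section
/- Let R be a congruence-simple semiring with RR ≠ {0}, viewed as a left semimodule over itself, and let ∼ be a semimodule congruence on R with ∼ ≠ R × R. Then the quotient semimodule M = R/∼ satisfies RM ≠ {0}. -/
/-- Let `R` be a congruence-simple semiring with `R·R ≠ {0}`, viewed as a left
semimodule over itself, and let `c` be a left-semimodule congruence on `R`
which is not the total relation.  Then the quotient semimodule `M = R/c`
satisfies `R·M ≠ {0}`, i.e. there are `r x` with `r[x] = [r * x] ≠ 0`. -/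
theorem quotient_of_simple_semiring_nontrivial_action {R : Type} [NonUnitalSemiring R]
    (hsimple : ∀ c : RingCon R, (∀ x y : R, c x y → x = y) ∨ (∀ x y : R, c x y))
    (hRR : ∃ x y : R, x * y ≠ 0)
    (c : AddCon R)
    (hmod : ∀ (x r s : R), c r s → c (x * r) (x * s))
    (hnontotal : ∃ x y : R, ¬ c x y) :
    ∃ r x : R, ¬ c (r * x) 0 := by
  by_contra h
  push_neg at h
  -- Under the assumption that every product is congruent to 0, `c` becomes a
  -- ring congruence.
  let d : RingCon R :=
    ⟨⟨c.toSetoid, fun {a b a' b'} _ _ => c.trans (h a a') (c.symm (h b b'))⟩, c.add'⟩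
  rcases hsimple d with htriv | htot
  · obtain ⟨x, y, hxy⟩ := hRR
    exact hxy (htriv _ _ (h x y))
  · obtain ⟨x, y, hxy⟩ := hnontotal
    exact hxy (htot x y)
end

section
/- Let M be a semimodule over a semiring R with RM ≠ {0}. If M has only trivial subsemimodules ({0} and M), then every nonzero quotient semimodule P = M/∼ satisfies RP ≠ {0}. -/
/-- Let `M` be a semimodule over a semiring `R` (via `T : R → End M`) with
`R·M ≠ {0}`.  If `M` has only trivial subsemimodules, then every nonzero
quotient semimodule `P = M/c` satisfies `R·P ≠ {0}`. -/
theorem quotient_of_subirreducible_nontrivial_action {R M : Type}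
    [NonUnitalSemiring R] [AddCommMonoid M] (T : R →ₙ+* AddMonoid.End M)
    (hRM : ∃ (r : R) (x : M), T r x ≠ 0)
    (hsub : ∀ N : AddSubmonoid M, (∀ (r : R), ∀ x ∈ N, T r x ∈ N) → N = ⊥ ∨ N = ⊤)
    (c : AddCon M)
    (hmod : ∀ (r : R) (x y : M), c x y → c (T r x) (T r y))
    (hnonzeroquot : ∃ x y : M, ¬ c x y) :
    ∃ (r : R) (x : M), ¬ c (T r x) 0 := by
  by_contra h
  push_neg at h
  set N : AddSubmonoid M :=
    { carrier := {x | c x 0}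
      zero_mem' := c.refl 0
      add_mem' := fun {a b} ha hb => by
        have := c.add ha hb
        simpa using this } with hN
  have hact : ∀ (r : R), ∀ x ∈ N, T r x ∈ N := fun r x _ => h r x
  rcases hsub N hact with hbot | htop
  · obtain ⟨r, x, hx⟩ := hRM
    have hmem : T r x ∈ N := h r x
    rw [hbot] at hmem
    exact hx (by simpa using hmem)
  · obtain ⟨x, y, hxy⟩ := hnonzeroquot
    have hx : c x 0 := by have : x ∈ N := htop ▸ AddSubmonoid.mem_top x; exact this
    have hy : c y 0 := by have : y ∈ N := htop ▸ AddSubmonoid.mem_top y; exact this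
    exact hxy (c.trans hx (c.symm hy))
end

section
/- Let M be a semimodule over a semiring R with RM ≠ {0}. If M has only trivial quotient semimodules (equivalently, its only semimodule congruences are the identity and total relations), then every nonzero subsemimodule N ⊆ M satisfies RN ≠ {0}. -/
/-- Let `M` be a semimodule over a semiring `R` (via `T : R → End M`) with
`R·M ≠ {0}`.  If `M` has only trivial semimodule congruences (equivalently,
only trivial quotient semimodules), then every nonzero subsemimodule
`N ⊆ M` satisfies `R·N ≠ {0}`. -/
theorem subsemimodule_of_quotientirreducible_nontrivial_action {R M : Type}
    [NonUnitalSemiring R] [AddCommMonoid M] (T : R →ₙ+* AddMonoid.End M)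
    (hRM : ∃ (r : R) (x : M), T r x ≠ 0)
    (hquot : ∀ c : AddCon M, (∀ (r : R) (x y : M), c x y → c (T r x) (T r y)) →
      (∀ x y : M, c x y → x = y) ∨ (∀ x y : M, c x y)) :
    ∀ N : AddSubmonoid M, (∀ (r : R), ∀ x ∈ N, T r x ∈ N) → N ≠ ⊥ →
      ∃ (r : R), ∃ x ∈ N, T r x ≠ 0 := by
  intro N hNinv hNne
  by_contra h
  push_neg at h
  -- annihilator relation
  set A : Set M := {x : M | ∀ r : R, T r x = 0} with hA
  have hA0 : (0 : M) ∈ A := fun r => by simp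
  have hAadd : ∀ {a b : M}, a ∈ A → b ∈ A → a + b ∈ A := by
    intro a b ha hb r
    have := map_add (T r) a b
    simp [this, ha r, hb r]
  let c : AddCon M :=
    { r := fun x y => ∃ a ∈ A, ∃ b ∈ A, x + a = y + b
      iseqv := by
        constructor
        · intro x; exact ⟨0, hA0, 0, hA0, rfl⟩
        · rintro x y ⟨a, ha, b, hb, hab⟩; exact ⟨b, hb, a, ha, hab.symm⟩
        · rintro x y z ⟨a, ha, b, hb, hab⟩ ⟨d, hd, e, he, hde⟩
          refine ⟨a + d, hAadd ha hd, e + b, hAadd he hb, ?_⟩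
          calc x + (a + d) = (x + a) + d := by rw [add_assoc]
            _ = (y + b) + d := by rw [hab]
            _ = (y + d) + b := by rw [add_right_comm]
            _ = (z + e) + b := by rw [hde]
            _ = z + (e + b) := by rw [add_assoc]
      add' := by
        rintro w x y z ⟨a, ha, b, hb, hab⟩ ⟨d, hd, e, he, hde⟩
        refine ⟨a + d, hAadd ha hd, b + e, hAadd hb he, ?_⟩
        calc w + y + (a + d) = (w + a) + (y + d) := by abel
          _ = (x + b) + (z + e) := by rw [hab, hde]
          _ = x + z + (b + e) := by abel }
  have hcinv : ∀ (r : R) (x y : M), c x y → c (T r x) (T r y) := by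
    rintro r x y ⟨a, ha, b, hb, hab⟩
    refine ⟨0, hA0, 0, hA0, ?_⟩
    have : T r (x + a) = T r (y + b) := by rw [hab]
    simpa [map_add, ha r, hb r] using this
  rcases hquot c hcinv with hid | htot
  · -- c is identity; but N ⊆ A and N nonzero gives a contradiction
    apply hNne
    ext x
    simp only [AddSubmonoid.mem_bot]
    constructor
    · intro hx
      have hxA : x ∈ A := fun r => h r x hx
      exact hid x 0 ⟨0, hA0, x, hxA, by simp⟩
    · rintro rfl; exact zero_mem N
  · -- c total: everything related to 0, so T r x = 0 for all r x
    obtain ⟨r, x, hrx⟩ := hRM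
    obtain ⟨a, ha, b, hb, hab⟩ := htot x 0
    apply hrx
    have : T r (x + a) = T r (0 + b) := by rw [hab]
    simpa [map_add, ha r, hb r] using this
end

section
/- Any finite congruence-simple semiring R with RR ≠ {0} admits a finite irreducible semimodule. -/
/-!
A congruence-simple `R` with `RR ≠ 0` acts faithfully on itself from the left, since the
congruence `a ~ b ↔ ∀ r, r * a = r * b` cannot be total. Take a minimal left ideal `N` with
`RN ≠ 0`: every smaller invariant submonoid of `N` is annihilated by `R`, and by faithfulness `N`
is generated by `RN`. The quotient `M` of `N` by a maximal proper compatible congruence is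
congruence-simple, keeps `RM ≠ 0` because `N` is generated by `RN`, and every proper invariant
submonoid `P` of `M` is annihilated by `R`. Then the Bourne congruence of `P` is compatible, so it
is the identity, i.e. `P = 0`.
-/

instance AddCon.instFinite {M : Type*} [Add M] [Finite M] : Finite (AddCon M) :=
  Finite.of_injective (fun c : AddCon M => ⇑c) fun _ _ => AddCon.ext'

instance AddCon.instFiniteQuotient {M : Type*} [Add M] [Finite M] (c : AddCon M) :
    Finite c.Quotient :=
  Quotient.finite _

section

variable {R : Type*} [NonUnitalSemiring R]

variable (R) in
def RingCon.leftMulEq : RingCon R where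
  r a b := ∀ r : R, r * a = r * b
  iseqv := ⟨fun _ _ => rfl, fun h r => (h r).symm, fun h₁ h₂ r => (h₁ r).trans (h₂ r)⟩
  mul' {_ x _ _} h₁ h₂ r := by rw [← mul_assoc, ← mul_assoc, h₁ r, h₂ (r * x)]
  add' h₁ h₂ r := by rw [mul_add, mul_add, h₁ r, h₂ r]

theorem eq_zero_of_forall_mul_eq_zero
    (hsimple : ∀ c : RingCon R, (∀ x y : R, c x y → x = y) ∨ (∀ x y : R, c x y))
    (hRR : ∃ x y : R, x * y ≠ 0) {x : R} (hx : ∀ r, r * x = 0) : x = 0 := by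
  rcases hsimple (RingCon.leftMulEq R) with hid | htotal
  · exact hid x 0 fun r => by rw [hx r, mul_zero]
  · obtain ⟨a, b, hab⟩ := hRR
    exact absurd ((htotal b 0 a).trans (mul_zero a)) hab

end

namespace SemimoduleRep

variable {R M : Type*} [NonUnitalSemiring R] [AddCommMonoid M] (T : R →ₙ+* AddMonoid.End M)

def IsInvariant (N : AddSubmonoid M) : Prop := ∀ r, ∀ x ∈ N, T r x ∈ N

def IsAnnihilated (N : AddSubmonoid M) : Prop := ∀ r, ∀ x ∈ N, T r x = 0

def IsCompatible (c : AddCon M) : Prop := ∀ r x y, c x y → c (T r x) (T r y)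

def IsCongruenceSimple : Prop :=
  ∀ c : AddCon M, IsCompatible T c → (∀ x y, c x y → x = y) ∨ (∀ x y, c x y)

def ProperInvariantsAnnihilated : Prop :=
  ∀ N : AddSubmonoid M, IsInvariant T N → N = ⊤ ∨ IsAnnihilated T N

def IsIrreducible : Prop :=
  (∃ r x, T r x ≠ 0) ∧ (∀ N : AddSubmonoid M, IsInvariant T N → N = ⊥ ∨ N = ⊤) ∧
    IsCongruenceSimple T

def actionSpan : AddSubmonoid M := AddSubmonoid.closure {y | ∃ r x, T r x = y}

def restrictRep (N : AddSubmonoid M) (hN : IsInvariant T N) : R →ₙ+* AddMonoid.End N where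
  toFun r :=
    { toFun x := ⟨T r (x : M), hN r x x.2⟩
      map_zero' := Subtype.ext (map_zero (T r))
      map_add' x y := Subtype.ext (map_add (T r) (x : M) y) }
  map_mul' r s := AddMonoidHom.ext fun x => Subtype.ext (DFunLike.congr_fun (map_mul T r s) (x : M))
  map_zero' := AddMonoidHom.ext fun x => Subtype.ext (DFunLike.congr_fun (map_zero T) (x : M))
  map_add' r s := AddMonoidHom.ext fun x => Subtype.ext (DFunLike.congr_fun (map_add T r s) (x : M))

def quotientRep (c : AddCon M) (hc : IsCompatible T c) : R →ₙ+* AddMonoid.End c.Quotient where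
  toFun r := c.lift (c.mk'.comp (T r)) fun x y h => c.eq.2 (hc r x y h)
  map_mul' r s := AddMonoidHom.ext fun a => a.induction_on fun x =>
    congrArg ((↑) : M → c.Quotient) (DFunLike.congr_fun (map_mul T r s) x)
  map_zero' := AddMonoidHom.ext fun a => a.induction_on fun x =>
    congrArg ((↑) : M → c.Quotient) (DFunLike.congr_fun (map_zero T) x)
  map_add' r s := AddMonoidHom.ext fun a => a.induction_on fun x =>
    congrArg ((↑) : M → c.Quotient) (DFunLike.congr_fun (map_add T r s) x)

variable (R) in
def leftRegularRep : R →ₙ+* AddMonoid.End R :=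
  { AddMonoid.End.mulLeft with map_mul' := fun r s => AddMonoidHom.ext (mul_assoc r s) }

def bourneCon (P : AddSubmonoid M) : AddCon M where
  r a b := ∃ p ∈ P, ∃ q ∈ P, a + p = b + q
  iseqv.refl _ := ⟨0, P.zero_mem, 0, P.zero_mem, rfl⟩
  iseqv.symm := fun ⟨p, hp, q, hq, h⟩ => ⟨q, hq, p, hp, h.symm⟩
  iseqv.trans := fun ⟨p, hp, q, hq, h₁⟩ ⟨p', hp', q', hq', h₂⟩ =>
    ⟨p + p', P.add_mem hp hp', q' + q, P.add_mem hq' hq, by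
      rw [← add_assoc, h₁, add_right_comm, h₂, add_assoc]⟩
  add' := fun ⟨p, hp, q, hq, h₁⟩ ⟨p', hp', q', hq', h₂⟩ =>
    ⟨p + p', P.add_mem hp hp', q + q', P.add_mem hq hq', by
      rw [add_add_add_comm, h₁, h₂, add_add_add_comm]⟩

theorem bourneCon_of_mem {P : AddSubmonoid M} {p : M} (hp : p ∈ P) : bourneCon P p 0 :=
  ⟨0, P.zero_mem, p, hp, by rw [add_zero, zero_add]⟩

variable {T}

theorem IsAnnihilated.map_eq_of_bourneCon {P : AddSubmonoid M} (hP : IsAnnihilated T P)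
    {a b : M} (hab : bourneCon P a b) (r : R) : T r a = T r b := by
  obtain ⟨p, hp, q, hq, h⟩ := hab
  simpa only [map_add, hP r p hp, hP r q hq, add_zero] using congrArg (T r) h

theorem IsCongruenceSimple.eq_bot_of_isAnnihilated (hcong : IsCongruenceSimple T)
    (hRM : ∃ r x, T r x ≠ 0) {P : AddSubmonoid M} (hP : IsAnnihilated T P) : P = ⊥ := by
  have hcompat : IsCompatible T (bourneCon P) := fun r a b h => by
    rw [hP.map_eq_of_bourneCon h r]
    exact AddCon.refl _ _
  rcases hcong _ hcompat with hid | htotal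
  · exact (AddSubmonoid.eq_bot_iff_forall P).2 fun p hp => hid p 0 (bourneCon_of_mem hp)
  · obtain ⟨r, x, hrx⟩ := hRM
    exact absurd (by simpa only [map_zero] using hP.map_eq_of_bourneCon (htotal x 0) r) hrx

theorem IsCongruenceSimple.isIrreducible (hcong : IsCongruenceSimple T)
    (hRM : ∃ r x, T r x ≠ 0) (hT : ProperInvariantsAnnihilated T) : IsIrreducible T :=
  ⟨hRM, fun P hP => (hT P hP).symm.imp (hcong.eq_bot_of_isAnnihilated hRM) id, hcong⟩

theorem actionSpan_eq_top (hT : ProperInvariantsAnnihilated T)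
    (hfaith : ∀ x, (∀ r, T r x = 0) → x = 0) (hRM : ∃ r x, T r x ≠ 0) :
    actionSpan T = ⊤ := by
  have hinv : IsInvariant T (actionSpan T) := fun s y hy => by
    induction hy using AddSubmonoid.closure_induction with
    | mem _ hz =>
      obtain ⟨r, x, rfl⟩ := hz
      exact AddSubmonoid.subset_closure ⟨s * r, x, by rw [map_mul]; rfl⟩
    | zero => simpa only [map_zero] using zero_mem _
    | add _ _ _ _ ha hb => simpa only [map_add] using add_mem ha hb
  refine (hT _ hinv).resolve_right fun hann => ?_
  obtain ⟨r, x, hrx⟩ := hRM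
  exact hrx (hfaith _ fun s => hann s _ (AddSubmonoid.subset_closure ⟨r, x, rfl⟩))

theorem properInvariantsAnnihilated_restrictRep {N : AddSubmonoid M}
    (hN : Minimal (fun N => IsInvariant T N ∧ ¬ IsAnnihilated T N) N) :
    ProperInvariantsAnnihilated (restrictRep T N hN.1.1) := by
  intro Q hQ
  refine or_iff_not_imp_right.2 fun hQann => ?_
  have hQinv : IsInvariant T (Q.map N.subtype) := by
    rintro r _ ⟨x, hx, rfl⟩
    exact ⟨_, hQ r x hx, rfl⟩
  have hQnot : ¬ IsAnnihilated T (Q.map N.subtype) := fun h =>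
    hQann fun r x hx => Subtype.ext (h r x ⟨x, hx, rfl⟩)
  have hNQ : N ≤ Q.map N.subtype :=
    hN.2 ⟨hQinv, hQnot⟩ (AddSubmonoid.map_le_iff_le_comap.2 fun x _ => x.2)
  refine eq_top_iff.2 fun x _ => ?_
  obtain ⟨y, hy, hyx⟩ := hNQ x.2
  rwa [← Subtype.ext hyx]

theorem isCongruenceSimple_quotientRep {θ : AddCon M}
    (hθ : Maximal (fun c => IsCompatible T c ∧ ¬ ∀ x y, c x y) θ) :
    IsCongruenceSimple (quotientRep T θ hθ.1.1) := by
  intro c hc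
  let d := AddCon.comap ((↑) : M → θ.Quotient) (fun _ _ => rfl) c
  have hθd : θ ≤ d := fun x y h => by
    show c x y
    rw [θ.eq.2 h]
    exact c.refl _
  have hd : IsCompatible T d := fun r x y h => hc r x y h
  by_cases htotal : ∀ x y, d x y
  · exact Or.inr fun a b => AddCon.induction_on₂ a b htotal
  · exact Or.inl fun a b => AddCon.induction_on₂ a b fun x y h =>
      θ.eq.2 (hθ.2 ⟨hd, htotal⟩ hθd h)

theorem properInvariantsAnnihilated_quotientRep (hT : ProperInvariantsAnnihilated T)
    (c : AddCon M) (hc : IsCompatible T c) :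
    ProperInvariantsAnnihilated (quotientRep T c hc) := by
  intro P hP
  rcases hT (P.comap c.mk') (fun r x hx => hP r x hx) with htop | hann
  · refine Or.inl (eq_top_iff.2 fun a _ => a.induction_on fun x => ?_)
    exact (htop ▸ AddSubmonoid.mem_top x : x ∈ P.comap c.mk')
  · exact Or.inr fun r a => a.induction_on fun x hx => congrArg _ (hann r x hx)

theorem exists_quotientRep_ne_zero (hgen : actionSpan T = ⊤) {c : AddCon M}
    (hc : IsCompatible T c) (hproper : ¬ ∀ x y, c x y) :
    ∃ r a, quotientRep T c hc r a ≠ 0 := by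
  by_contra! h
  have hker : actionSpan T ≤ AddMonoidHom.mker c.mk' :=
    AddSubmonoid.closure_le.2 fun _ ⟨r, x, hx⟩ => hx ▸ h r x
  rw [hgen] at hker
  have hzero : ∀ x, c x 0 := fun x => c.eq.1 (hker (AddSubmonoid.mem_top x))
  exact hproper fun x y => c.trans (hzero x) (c.symm (hzero y))

theorem isIrreducible_quotientRep (hgen : actionSpan T = ⊤) (hT : ProperInvariantsAnnihilated T)
    {θ : AddCon M} (hθ : Maximal (fun c => IsCompatible T c ∧ ¬ ∀ x y, c x y) θ) :
    IsIrreducible (quotientRep T θ hθ.1.1) :=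
  (isCongruenceSimple_quotientRep hθ).isIrreducible (exists_quotientRep_ne_zero hgen _ hθ.1.2)
    (properInvariantsAnnihilated_quotientRep hT θ hθ.1.1)

theorem exists_isIrreducible_subquotient [Finite R]
    (hfaith : ∀ x : R, (∀ r, r * x = 0) → x = 0) (hRR : ∃ x y : R, x * y ≠ 0) :
    ∃ (N : AddSubmonoid R) (θ : AddCon N) (T : R →ₙ+* AddMonoid.End θ.Quotient),
      IsIrreducible T := by
  let L := leftRegularRep R
  obtain ⟨N, -, hN⟩ := Finite.exists_le_minimal
    (p := fun N => IsInvariant L N ∧ ¬ IsAnnihilated L N) (a := ⊤)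
    ⟨fun _ _ _ => trivial, fun h => hRR.elim fun x ⟨y, hxy⟩ => hxy (h x y trivial)⟩
  let T := restrictRep L N hN.1.1
  have hT : ProperInvariantsAnnihilated T := properInvariantsAnnihilated_restrictRep hN
  have hRM : ∃ r x, T r x ≠ 0 := by
    by_contra! h
    exact hN.1.2 fun r x hx => congrArg Subtype.val (h r ⟨x, hx⟩)
  have hTfaith : ∀ x, (∀ r, T r x = 0) → x = 0 := fun x hx =>
    Subtype.ext (hfaith x fun r => congrArg Subtype.val (hx r))
  obtain ⟨θ, -, hθ⟩ := Finite.exists_le_maximal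
    (p := fun c : AddCon N => IsCompatible T c ∧ ¬ ∀ x y, c x y) (a := ⊥)
    ⟨fun r x y h => congrArg (T r) h,
      fun h => hRM.elim fun r ⟨x, hx⟩ => hx (by rw [h x 0, map_zero])⟩
  exact ⟨N, θ, quotientRep T θ hθ.1.1,
    isIrreducible_quotientRep (actionSpan_eq_top hT hTfaith hRM) hT hθ⟩

end SemimoduleRep

/-- Any finite congruence-simple semiring `R` with `R·R ≠ {0}` admits a finite
irreducible semimodule: a finite commutative monoid `M` with a representation
`T : R → End M` such that `R·M ≠ {0}`, `M` has only trivial subsemimodules,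
and `M` has only trivial semimodule congruences. -/
theorem finite_congruenceSimple_admits_irreducible_semimodule {R : Type}
    [NonUnitalSemiring R] [Fintype R]
    (hsimple : ∀ c : RingCon R, (∀ x y : R, c x y → x = y) ∨ (∀ x y : R, c x y))
    (hRR : ∃ x y : R, x * y ≠ 0) :
    ∃ (M : Type) (_ : AddCommMonoid M) (_ : Fintype M) (T : R →ₙ+* AddMonoid.End M),
      (∃ (r : R) (x : M), T r x ≠ 0) ∧
      (∀ N : AddSubmonoid M, (∀ (r : R), ∀ x ∈ N, T r x ∈ N) → N = ⊥ ∨ N = ⊤) ∧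
      (∀ c : AddCon M, (∀ (r : R) (x y : M), c x y → c (T r x) (T r y)) →
        (∀ x y : M, c x y → x = y) ∨ (∀ x y : M, c x y)) := by
  obtain ⟨N, θ, T, hT⟩ := SemimoduleRep.exists_isIrreducible_subquotient
    (fun _ => eq_zero_of_forall_mul_eq_zero hsimple hRR) hRR
  exact ⟨θ.Quotient, inferInstance, Fintype.ofFinite _, T, hT⟩
end

section
/- Let R be a finite congruence-simple semiring with idempotent addition and let M be a finite irreducible semimodule over R. Then (M,+) is idempotent, and for all a, b ∈ M there exists r ∈ R such that rx = 0 whenever x + a = a, and rx = b otherwise. Consequently the image of R in End(M) under the representation is a dense subsemiring. -/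
/-- Let `R` be a finite congruence-simple semiring with idempotent addition and
`M` a finite irreducible semimodule over `R` (via `T : R → End M`).  Then
`(M,+)` is idempotent, and for all `a b : M` there is `r : R` acting as the map
`e_{a,b}` : `r·x = 0` if `x + a = a` and `r·x = b` otherwise.  Hence the image
of `R` in `End M` is a dense subsemiring. -/
theorem density_of_irreducible_representation {R M : Type}
    [NonUnitalSemiring R] [Fintype R] [AddCommMonoid M] [Fintype M]
    (hsimple : ∀ c : RingCon R, (∀ x y : R, c x y → x = y) ∨ (∀ x y : R, c x y))
    (hidem : ∀ x : R, x + x = x)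
    (T : R →ₙ+* AddMonoid.End M)
    (hRM : ∃ (r : R) (x : M), T r x ≠ 0)
    (hsub : ∀ N : AddSubmonoid M, (∀ (r : R), ∀ x ∈ N, T r x ∈ N) → N = ⊥ ∨ N = ⊤)
    (hquot : ∀ c : AddCon M, (∀ (r : R) (x y : M), c x y → c (T r x) (T r y)) →
      (∀ x y : M, c x y → x = y) ∨ (∀ x y : M, c x y)) :
    (∀ x : M, x + x = x) ∧
    ∀ a b : M, ∃ r : R, ∀ x : M,
      (x + a = a → T r x = 0) ∧ (x + a ≠ a → T r x = b) := by
  classical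
  have hmul : ∀ (s r : R) (x : M), T (s * r) x = T s (T r x) := fun s r x => by
    rw [map_mul]; rfl
  have haddR : ∀ (s r : R) (x : M), T (s + r) x = T s x + T r x := fun s r x => by
    rw [map_add]; rfl
  have hT0 : ∀ r : R, T r (0 : M) = 0 := fun r => map_zero (T r)
  have hTadd : ∀ (r : R) (x y : M), T r (x + y) = T r x + T r y := fun r x y =>
    map_add (T r) x y
  obtain ⟨r₀, x₀, hx₀⟩ := hRM
  have hx₀0 : x₀ ≠ 0 := fun h => hx₀ (by rw [h]; exact hT0 r₀)
  -- Step 1: M is idempotent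
  have hMidem : ∀ x : M, x + x = x := by
    rcases hquot
      { r := fun x y => ∀ s : R, T s x = T s y
        iseqv := ⟨fun _ _ => rfl, fun h s => (h s).symm, fun h1 h2 s => (h1 s).trans (h2 s)⟩
        add' := fun h1 h2 s => by rw [hTadd, hTadd, h1 s, h2 s] }
      (fun r x y h s => by rw [← hmul, ← hmul]; exact h (s * r)) with h | h
    · intro x
      exact h _ _ (fun s => by rw [hTadd, ← haddR, hidem])
    · exact absurd ((h x₀ 0 r₀).trans (hT0 r₀)) hx₀
  have hadd0 : ∀ u v : M, u + v = 0 → u = 0 := by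
    intro u v h
    have h2 : u + (u + v) = u + v := by rw [← add_assoc, hMidem]
    rwa [h, add_zero] at h2
  have hadd0' : ∀ p q : M, p + q = 0 ↔ (p = 0 ∧ q = 0) := fun p q =>
    ⟨fun h => ⟨hadd0 p q h, hadd0 q p (by rwa [add_comm] at h)⟩,
     fun ⟨h1, h2⟩ => by rw [h1, h2, add_zero]⟩
  -- sum lemmas
  have hsum_mem : ∀ (s : Finset M) (f : M → M) (x : M), x ∈ s →
      f x + ∑ y ∈ s, f y = ∑ y ∈ s, f y := by
    intro s f x hx
    rw [← Finset.add_sum_erase s f hx, ← add_assoc, hMidem]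
  have hsum_le : ∀ (s : Finset M) (f : M → M) (d : M), (∀ x ∈ s, f x + d = d) →
      (∑ y ∈ s, f y) + d = d := by
    intro s f d
    induction s using Finset.induction_on with
    | empty => intro _; simp
    | @insert x t hx ih =>
        intro h
        rw [Finset.sum_insert hx, add_assoc, ih (fun y hy => h y (Finset.mem_insert_of_mem hy)),
          h x (Finset.mem_insert_self x t)]
  set topM : M := ∑ y ∈ (Finset.univ : Finset M), y with htopdef
  have htop : ∀ x : M, x + topM = topM := fun x =>
    hsum_mem Finset.univ (fun y => y) x (Finset.mem_univ x)
  have htopne : topM ≠ 0 := by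
    intro h
    have := htop x₀
    rw [h, add_zero] at this
    exact hx₀0 this
  -- annihilator is trivial
  have hzero : ∀ m : M, (∀ r : R, T r m = 0) → m = 0 := by
    intro m hm
    let Z : AddSubmonoid M :=
      { carrier := {m | ∀ r : R, T r m = 0}
        add_mem' := by
          intro a b ha hb r
          rw [hTadd, ha r, hb r, add_zero]
        zero_mem' := fun r => hT0 r }
    rcases hsub Z (fun s x hx r => by rw [← hmul]; exact hx (r * s)) with h | h
    · have : m ∈ Z := hm
      rw [h] at this
      simpa using this
    · exfalso
      have : x₀ ∈ Z := by rw [h]; trivial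
      exact hx₀ (this r₀)
  -- strong transitivity
  have htrans : ∀ m : M, m ≠ 0 → ∀ b : M, ∃ s : R, T s m = b := by
    intro m hm b
    let N : AddSubmonoid M :=
      { carrier := {b | ∃ s : R, T s m = b}
        add_mem' := by
          rintro a b ⟨s, hs⟩ ⟨t, ht⟩
          exact ⟨s + t, by rw [haddR, hs, ht]⟩
        zero_mem' := ⟨0, by rw [map_zero]; rfl⟩ }
    rcases hsub N (by rintro r x ⟨s, hs⟩; exact ⟨r * s, by rw [hmul, hs]⟩) with h | h
    · exfalso
      apply hm
      apply hzero
      intro r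
      have : T r m ∈ N := ⟨r, rfl⟩
      rw [h] at this
      simpa using this
    · have : b ∈ N := by rw [h]; trivial
      exact this
  -- separation
  have hsep : ∀ a x : M, x + a ≠ a → ∃ r : R, T r a = 0 ∧ T r x ≠ 0 := by
    intro a x hxa
    rcases hquot
      { r := fun u v => ∀ s : R, (T s u = 0 ↔ T s v = 0)
        iseqv := ⟨fun _ _ => Iff.rfl, fun h s => (h s).symm, fun h1 h2 s => (h1 s).trans (h2 s)⟩
        add' := fun h1 h2 s => by
          rw [hTadd, hTadd, hadd0', hadd0']
          exact and_congr (h1 s) (h2 s) }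
      (fun r u v h s => by rw [← hmul, ← hmul]; exact h (s * r)) with h | h
    · have hne : ¬ ∀ s : R, (T s a = 0 ↔ T s (x + a) = 0) := fun hc => hxa (h a (x + a) hc).symm
      push_neg at hne
      obtain ⟨s, hs⟩ := hne
      have himp : T s (x + a) = 0 → T s a = 0 := by
        intro h0
        exact hadd0 (T s a) (T s x) (by rw [add_comm, ← hTadd]; exact h0)
      have hsa : T s a = 0 := by tauto
      have hsxa : T s (x + a) ≠ 0 := by tauto
      refine ⟨s, hsa, ?_⟩
      rwa [hTadd, hsa, add_zero] at hsxa
    · exact absurd ((h x₀ 0 r₀).2 (hT0 r₀)) hx₀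
  -- applying T to finite sums in R
  have hsum_apply : ∀ (s : Finset M) (g : M → R) (y : M),
      T (∑ x ∈ s, g x) y = ∑ x ∈ s, T (g x) y := by
    intro s g y
    induction s using Finset.induction_on with
    | empty => simp
    | @insert x t hx ih => rw [Finset.sum_insert hx, Finset.sum_insert hx, haddR, ih]
  refine ⟨hMidem, ?_⟩
  intro a b
  let V : AddSubmonoid M :=
    { carrier := {b | ∃ r : R, ∀ x : M, (x + a = a → T r x = 0) ∧ (x + a ≠ a → T r x = b)}
      add_mem' := by
        rintro p q ⟨r, hr⟩ ⟨t, ht⟩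
        refine ⟨r + t, fun x => ⟨fun h => ?_, fun h => ?_⟩⟩
        · rw [haddR, (hr x).1 h, (ht x).1 h, add_zero]
        · rw [haddR, (hr x).2 h, (ht x).2 h]
      zero_mem' := ⟨0, fun x => ⟨fun _ => by simp, fun _ => by simp⟩⟩ }
  have hVinv : ∀ (s : R), ∀ p ∈ V, T s p ∈ V := by
    rintro s p ⟨r, hr⟩
    refine ⟨s * r, fun x => ⟨fun h => ?_, fun h => ?_⟩⟩
    · rw [hmul, (hr x).1 h]; exact hT0 s
    · rw [hmul, (hr x).2 h]
  have hselect : ∀ x : M, x + a ≠ a → ∃ u : R, T u a = 0 ∧ T u x = topM := by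
    intro x hx
    obtain ⟨r, hra, hrx⟩ := hsep a x hx
    obtain ⟨s, hs⟩ := htrans _ hrx topM
    exact ⟨s * r, by rw [hmul, hra]; exact hT0 s, by rw [hmul]; exact hs⟩
  choose u hu1 hu2 using hselect
  set F : Finset M := Finset.univ.filter (fun x => ¬(x + a = a)) with hF
  set g : M → R := fun x => if h : x + a = a then 0 else u x h with hg
  have hga : ∀ x : M, ∀ hx : ¬(x + a = a), T (g x) a = 0 := by
    intro x hx
    rw [hg]; dsimp only; rw [dif_neg hx]; exact hu1 x hx
  have hgx : ∀ x : M, ∀ hx : ¬(x + a = a), T (g x) x = topM := by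
    intro x hx
    rw [hg]; dsimp only; rw [dif_neg hx]; exact hu2 x hx
  have hginV : topM ∈ V := by
    refine ⟨∑ x ∈ F, g x, fun y => ⟨fun hy => ?_, fun hy => ?_⟩⟩
    · rw [hsum_apply]
      apply Finset.sum_eq_zero
      intro x hx
      have hxa : ¬(x + a = a) := (Finset.mem_filter.mp hx).2
      have h1 := hTadd (g x) y a
      rw [hy, hga x hxa, add_zero] at h1
      exact h1.symm
    · rw [hsum_apply]
      have hyF : y ∈ F := Finset.mem_filter.mpr ⟨Finset.mem_univ y, hy⟩
      have hge : T (g y) y + ∑ x ∈ F, T (g x) y = ∑ x ∈ F, T (g x) y :=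
        hsum_mem F (fun x => T (g x) y) y hyF
      rw [hgx y hy] at hge
      have hle : (∑ x ∈ F, T (g x) y) + topM = topM :=
        hsum_le F (fun x => T (g x) y) topM (fun x _ => htop _)
      calc (∑ x ∈ F, T (g x) y) = topM + ∑ x ∈ F, T (g x) y := hge.symm
        _ = (∑ x ∈ F, T (g x) y) + topM := add_comm _ _
        _ = topM := hle
  rcases hsub V hVinv with h | h
  · exfalso
    rw [h] at hginV
    exact htopne (by simpa using hginV)
  · have : b ∈ V := by rw [h]; trivial
    exact this
end

section
/- Let M be an idempotent commutative monoid with absorbing element ∞, and let R be a dense subsemiring of End(M) with z := e_{0,∞} the absorbing element of (R,+). Then the map θ : M → Rz, b ↦ e_{0,b} is a monoid isomorphism from (M,+) onto the submonoid Rz = {f ∘ z : f ∈ R} of (R,+). Consequently, if dense subsemirings R₁ ⊆ End(M₁) and R₂ ⊆ End(M₂) are isomorphic as semirings, then M₁ and M₂ are isomorphic as monoids. -/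
theorem End_add_apply {M : Type} [AddCommMonoid M] (f g : AddMonoid.End M) (x : M) :
    (f + g) x = f x + g x := rfl

theorem End_mul_apply {M : Type} [AddCommMonoid M] (f g : AddMonoid.End M) (x : M) :
    (f * g) x = f (g x) := rfl

theorem End_zero_apply {M : Type} [AddCommMonoid M] (x : M) :
    (0 : AddMonoid.End M) x = 0 := rfl

open Classical in
theorem Eab_apply {M : Type} [AddCommMonoid M] (idem : ∀ x : M, x + x = x)
    (a b x : M) : Eab idem a b x = if x + a = a then 0 else b := rfl

theorem theta_add' {M : Type} [AddCommMonoid M] (idem : ∀ x : M, x + x = x) (b b' : M) :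
    Eab idem 0 (b + b') = Eab idem 0 b + Eab idem 0 b' := by
  refine DFunLike.ext _ _ fun x => ?_
  simp only [End_add_apply, Eab_apply]
  by_cases h : x = 0 <;> simp [h]

theorem theta_zero' {M : Type} [AddCommMonoid M] (idem : ∀ x : M, x + x = x) :
    Eab idem 0 (0 : M) = 0 := by
  refine DFunLike.ext _ _ fun x => ?_
  simp only [Eab_apply, End_zero_apply]
  by_cases h : x = 0 <;> simp [h]

theorem theta_inj' {M : Type} [AddCommMonoid M] (idem : ∀ x : M, x + x = x)
    (inf : M) (habs : ∀ x : M, x + inf = inf) :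
    Function.Injective (fun b : M => Eab idem 0 b) := by
  intro b b' h
  by_cases hinf : inf = 0
  · have hall : ∀ x : M, x = 0 := fun x => by
      have := habs x; rw [hinf, add_zero] at this; exact this
    rw [hall b, hall b']
  · have h2 := DFunLike.congr_fun h inf
    simp only [Eab_apply] at h2
    simpa [hinf] using h2

theorem theta_mul_z {M : Type} [AddCommMonoid M] (idem : ∀ x : M, x + x = x)
    (inf : M) (f : AddMonoid.End M) :
    f * Eab idem 0 inf = Eab idem 0 (f inf) := by
  refine DFunLike.ext _ _ fun x => ?_
  show f (Eab idem 0 inf x) = _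
  simp only [Eab_apply]
  by_cases h : x = 0 <;> simp [h]

theorem theta_fix {M : Type} [AddCommMonoid M] (idem : ∀ x : M, x + x = x)
    (inf : M) (habs : ∀ x : M, x + inf = inf) (b : M) :
    Eab idem 0 b * Eab idem 0 inf = Eab idem 0 b := by
  rw [theta_mul_z]
  congr 1
  by_cases hinf : inf = 0
  · have hall : ∀ x : M, x = 0 := fun x => by
      have := habs x; rw [hinf, add_zero] at this; exact this
    rw [hall ((Eab idem 0 b) inf), hall b]
  · simp only [Eab_apply]
    simp [hinf]

theorem z_absorb {M : Type} [AddCommMonoid M] (idem : ∀ x : M, x + x = x)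
    (inf : M) (habs : ∀ x : M, x + inf = inf) (f : AddMonoid.End M) :
    f + Eab idem 0 inf = Eab idem 0 inf := by
  refine DFunLike.ext _ _ fun x => ?_
  simp only [End_add_apply, Eab_apply]
  by_cases h : x = 0 <;> simp [h, habs]

/-- Let `M` be an idempotent commutative monoid with absorbing element `∞` and
`S ⊆ End M` a dense subsemiring, with `z = e_{0,∞}` the absorbing element of
`(S,+)`.  Then `θ : M → S·z`, `b ↦ e_{0,b}`, is a monoid isomorphism of `(M,+)`
onto the submonoid `S·z = {f ∘ z : f ∈ S}` of `(S,+)`.  Consequently, if dense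
subsemirings `S ⊆ End M` and `S₂ ⊆ End M₂` are isomorphic as semirings, then
the monoids `M` and `M₂` are isomorphic. -/
theorem theta_iso_and_isomorphy {M M₂ : Type} [AddCommMonoid M] [AddCommMonoid M₂]
    (idem : ∀ x : M, x + x = x) (inf : M) (habs : ∀ x : M, x + inf = inf)
    (S : NonUnitalSubsemiring (AddMonoid.End M))
    (hdense : ∀ a b : M, Eab idem a b ∈ S)
    (idem₂ : ∀ x : M₂, x + x = x) (inf₂ : M₂) (habs₂ : ∀ x : M₂, x + inf₂ = inf₂)
    (S₂ : NonUnitalSubsemiring (AddMonoid.End M₂))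
    (hdense₂ : ∀ a b : M₂, Eab idem₂ a b ∈ S₂) :
    -- θ is additive, preserves zero, is injective,
    ((∀ b b' : M, Eab idem 0 (b + b') = Eab idem 0 b + Eab idem 0 b') ∧
     Eab idem 0 (0 : M) = 0 ∧
     Function.Injective (fun b : M => Eab idem 0 b) ∧
     -- its image is exactly the submonoid `S·z` for `z = e_{0,∞}`:
     (∀ b : M, ∃ f ∈ S, f * Eab idem 0 inf = Eab idem 0 b) ∧
     (∀ f ∈ S, ∃ b : M, f * Eab idem 0 inf = Eab idem 0 b)) ∧
    -- consequence: isomorphic dense subsemirings have isomorphic monoids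
    (Nonempty (S ≃+* S₂) → Nonempty (M ≃+ M₂)) := by
  refine ⟨⟨theta_add' idem, theta_zero' idem, theta_inj' idem inf habs, ?_, ?_⟩, ?_⟩
  · intro b
    exact ⟨Eab idem 0 b, hdense 0 b, theta_fix idem inf habs b⟩
  · intro f _
    exact ⟨f inf, theta_mul_z idem inf f⟩
  · rintro ⟨φ⟩
    set z : S := ⟨Eab idem 0 inf, hdense 0 inf⟩ with hz
    set z₂ : S₂ := ⟨Eab idem₂ 0 inf₂, hdense₂ 0 inf₂⟩ with hz₂
    have habsS : ∀ a : S, a + z = z := fun a => Subtype.ext (z_absorb idem inf habs a.1)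
    have habsS₂ : ∀ a : S₂, a + z₂ = z₂ := fun a => Subtype.ext (z_absorb idem₂ inf₂ habs₂ a.1)
    have hφz : φ z = z₂ := by
      have h1 : φ z + z₂ = z₂ := habsS₂ (φ z)
      have h2 : z₂ + φ z = φ z := by
        calc z₂ + φ z = φ (φ.symm z₂) + φ z := by rw [φ.apply_symm_apply]
          _ = φ (φ.symm z₂ + z) := (map_add φ _ _).symm
          _ = φ z := by rw [habsS]
      rw [← h2, add_comm, h1]
    have hφz' : φ.symm z₂ = z := by
      rw [← hφz, φ.symm_apply_apply]
    set ψ : M → M₂ := fun b => (φ ⟨Eab idem 0 b, hdense 0 b⟩ : S₂).1 inf₂ with hψ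
    set ψ' : M₂ → M := fun c => (φ.symm ⟨Eab idem₂ 0 c, hdense₂ 0 c⟩ : S).1 inf with hψ'
    have key : ∀ b : M, ((φ ⟨Eab idem 0 b, hdense 0 b⟩ : S₂) : AddMonoid.End M₂)
        = Eab idem₂ 0 (ψ b) := by
      intro b
      have h1 : (⟨Eab idem 0 b, hdense 0 b⟩ : S) * z = ⟨Eab idem 0 b, hdense 0 b⟩ :=
        Subtype.ext (theta_fix idem inf habs b)
      have h2 : φ ⟨Eab idem 0 b, hdense 0 b⟩ = φ ⟨Eab idem 0 b, hdense 0 b⟩ * z₂ := by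
        rw [← hφz, ← map_mul, h1]
      calc ((φ ⟨Eab idem 0 b, hdense 0 b⟩ : S₂) : AddMonoid.End M₂)
          = ((φ ⟨Eab idem 0 b, hdense 0 b⟩ * z₂ : S₂) : AddMonoid.End M₂) := by rw [← h2]
        _ = ((φ ⟨Eab idem 0 b, hdense 0 b⟩ : S₂) : AddMonoid.End M₂) * Eab idem₂ 0 inf₂ := rfl
        _ = Eab idem₂ 0 (ψ b) := theta_mul_z idem₂ inf₂ _
    have key' : ∀ c : M₂, ((φ.symm ⟨Eab idem₂ 0 c, hdense₂ 0 c⟩ : S) : AddMonoid.End M)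
        = Eab idem 0 (ψ' c) := by
      intro c
      have h1 : (⟨Eab idem₂ 0 c, hdense₂ 0 c⟩ : S₂) * z₂ = ⟨Eab idem₂ 0 c, hdense₂ 0 c⟩ :=
        Subtype.ext (theta_fix idem₂ inf₂ habs₂ c)
      have h2 : φ.symm ⟨Eab idem₂ 0 c, hdense₂ 0 c⟩
          = φ.symm ⟨Eab idem₂ 0 c, hdense₂ 0 c⟩ * z := by
        rw [← hφz', ← map_mul, h1]
      calc ((φ.symm ⟨Eab idem₂ 0 c, hdense₂ 0 c⟩ : S) : AddMonoid.End M)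
          = ((φ.symm ⟨Eab idem₂ 0 c, hdense₂ 0 c⟩ * z : S) : AddMonoid.End M) := by rw [← h2]
        _ = ((φ.symm ⟨Eab idem₂ 0 c, hdense₂ 0 c⟩ : S) : AddMonoid.End M) * Eab idem 0 inf := rfl
        _ = Eab idem 0 (ψ' c) := theta_mul_z idem inf _
    have hli : ∀ b : M, ψ' (ψ b) = b := by
      intro b
      have h1 : (⟨Eab idem₂ 0 (ψ b), hdense₂ 0 (ψ b)⟩ : S₂) = φ ⟨Eab idem 0 b, hdense 0 b⟩ :=
        Subtype.ext (key b).symm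
      have h2 : Eab idem 0 (ψ' (ψ b)) = Eab idem 0 b := by
        rw [← key' (ψ b), h1, φ.symm_apply_apply]
      exact theta_inj' idem inf habs h2
    have hri : ∀ c : M₂, ψ (ψ' c) = c := by
      intro c
      have h1 : (⟨Eab idem 0 (ψ' c), hdense 0 (ψ' c)⟩ : S) = φ.symm ⟨Eab idem₂ 0 c, hdense₂ 0 c⟩ :=
        Subtype.ext (key' c).symm
      have h2 : Eab idem₂ 0 (ψ (ψ' c)) = Eab idem₂ 0 c := by
        rw [← key (ψ' c), h1, φ.apply_symm_apply]
      exact theta_inj' idem₂ inf₂ habs₂ h2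
    have hadd : ∀ b b' : M, ψ (b + b') = ψ b + ψ b' := by
      intro b b'
      have h1 : (⟨Eab idem 0 (b + b'), hdense 0 (b + b')⟩ : S)
          = ⟨Eab idem 0 b, hdense 0 b⟩ + ⟨Eab idem 0 b', hdense 0 b'⟩ :=
        Subtype.ext (theta_add' idem b b')
      have h2 : Eab idem₂ 0 (ψ (b + b')) = Eab idem₂ 0 (ψ b + ψ b') := by
        rw [← key (b + b'), h1, map_add]
        calc ((φ ⟨Eab idem 0 b, hdense 0 b⟩ + φ ⟨Eab idem 0 b', hdense 0 b'⟩ : S₂)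
              : AddMonoid.End M₂)
            = ((φ ⟨Eab idem 0 b, hdense 0 b⟩ : S₂) : AddMonoid.End M₂)
              + ((φ ⟨Eab idem 0 b', hdense 0 b'⟩ : S₂) : AddMonoid.End M₂) := rfl
          _ = Eab idem₂ 0 (ψ b) + Eab idem₂ 0 (ψ b') := by rw [key b, key b']
          _ = Eab idem₂ 0 (ψ b + ψ b') := (theta_add' idem₂ (ψ b) (ψ b')).symm
      exact theta_inj' idem₂ inf₂ habs₂ h2
    exact ⟨{ toFun := ψ, invFun := ψ', left_inv := hli, right_inv := hri, map_add' := hadd }⟩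
end

section
/- Let M be a finite idempotent commutative monoid, regarded as a lattice (M,∨,∧) with x ∨ y = x + y, and let M̃ denote the monoid (M,∧) (the dual lattice). Then the map End(M) → End(M̃), f ↦ f*, where f*(φ) = φ ∘ f under the identification of M̃ with Hom(M, L₂) for L₂ = ({0,1}, max), is a bijective anti-homomorphism: (f+g)* = f* + g*, 0* = 0, and (f ∘ g)* = g* ∘ f*. Hence the semirings End(M) and End(M̃) are anti-isomorphic. -/
/-- An endomorphism of the idempotent commutative monoid `(M, ∨, ⊥)`
(a finite lattice viewed as a monoid with `x + y = x ⊔ y`). -/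
def SupEnd {M : Type} [Lattice M] [BoundedOrder M] (f : M → M) : Prop :=
  f ⊥ = ⊥ ∧ ∀ x y : M, f (x ⊔ y) = f x ⊔ f y

/-- An endomorphism of the dual monoid `M̃ = (M, ∧, ⊤)`. -/
def InfEnd {M : Type} [Lattice M] [BoundedOrder M] (g : M → M) : Prop :=
  g ⊤ = ⊤ ∧ ∀ x y : M, g (x ⊓ y) = g x ⊓ g y

set_option linter.unusedSectionVars false

open scoped Classical

noncomputable def radj {M : Type} [Lattice M] [BoundedOrder M] [Fintype M]
    (f : M → M) (y : M) : M :=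
  (Finset.univ.filter (fun x => f x ≤ y)).sup id

noncomputable def ladj {M : Type} [Lattice M] [BoundedOrder M] [Fintype M]
    (g : M → M) (x : M) : M :=
  (Finset.univ.filter (fun y => x ≤ g y)).inf id

section
variable {M : Type} [Lattice M] [BoundedOrder M] [Fintype M]

lemma supEnd_mono {f : M → M} (hf : ∀ x y : M, f (x ⊔ y) = f x ⊔ f y) :
    Monotone f := by
  intro a b hab
  have : f b = f a ⊔ f b := by rw [← hf, sup_eq_right.mpr hab]
  exact le_sup_left.trans this.ge

lemma infEnd_mono {g : M → M} (hg : ∀ x y : M, g (x ⊓ y) = g x ⊓ g y) :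
    Monotone g := by
  intro a b hab
  have : g a = g a ⊓ g b := by rw [← hg, inf_eq_left.mpr hab]
  exact this.le.trans inf_le_right

lemma map_fsup {f : M → M} (hb : f ⊥ = ⊥)
    (hf : ∀ x y : M, f (x ⊔ y) = f x ⊔ f y) (s : Finset M) :
    f (s.sup id) = s.sup f := by
  induction s using Finset.cons_induction with
  | empty => simpa using hb
  | cons a s ha ih => simp [Finset.sup_cons, hf, ih]

lemma map_finf {g : M → M} (ht : g ⊤ = ⊤)
    (hg : ∀ x y : M, g (x ⊓ y) = g x ⊓ g y) (s : Finset M) :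
    g (s.inf id) = s.inf g := by
  induction s using Finset.cons_induction with
  | empty => simpa using ht
  | cons a s ha ih => simp [Finset.inf_cons, hg, ih]

lemma radj_gc {f : M → M} (hf : SupEnd f) (x y : M) :
    f x ≤ y ↔ x ≤ radj f y := by
  constructor
  · intro h
    exact Finset.le_sup (f := id) (by simp [h])
  · intro h
    have := supEnd_mono hf.2 h
    refine this.trans ?_
    rw [radj, map_fsup hf.1 hf.2]
    exact Finset.sup_le fun z hz => (Finset.mem_filter.mp hz).2

lemma ladj_gc {g : M → M} (hg : InfEnd g) (x y : M) :
    x ≤ g y ↔ ladj g x ≤ y := by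
  constructor
  · intro h
    exact Finset.inf_le (f := id) (by simp [h])
  · intro h
    have := infEnd_mono hg.2 h
    refine le_trans ?_ this
    rw [ladj, map_finf hg.1 hg.2]
    exact Finset.le_inf fun z hz => (Finset.mem_filter.mp hz).2

lemma radj_unique {f : M → M} (hf : SupEnd f) {y c : M}
    (h : ∀ x, f x ≤ y ↔ x ≤ c) : radj f y = c := by
  have h1 : radj f y ≤ c := (h _).mp ((radj_gc hf _ _).mpr le_rfl)
  have h2 : c ≤ radj f y := (radj_gc hf _ _).mp ((h c).mpr le_rfl)
  exact le_antisymm h1 h2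

lemma radj_infEnd {f : M → M} (hf : SupEnd f) : InfEnd (radj f) := by
  constructor
  · exact le_antisymm le_top ((radj_gc hf _ _).mp le_top)
  · intro y z
    refine le_antisymm (le_inf ?_ ?_) ?_
    · exact (radj_gc hf _ _).mp (((radj_gc hf _ _).mpr le_rfl).trans inf_le_left)
    · exact (radj_gc hf _ _).mp (((radj_gc hf _ _).mpr le_rfl).trans inf_le_right)
    · exact (radj_gc hf _ _).mp
        (le_inf ((radj_gc hf _ _).mpr inf_le_left) ((radj_gc hf _ _).mpr inf_le_right))

lemma ladj_supEnd {g : M → M} (hg : InfEnd g) : SupEnd (ladj g) := by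
  constructor
  · exact le_antisymm ((ladj_gc hg _ _).mp bot_le) bot_le
  · intro x y
    refine le_antisymm ?_ (sup_le ?_ ?_)
    · exact (ladj_gc hg _ _).mp
        (sup_le ((ladj_gc hg _ _).mpr le_sup_left) ((ladj_gc hg _ _).mpr le_sup_right))
    · exact (ladj_gc hg _ _).mp (le_sup_left.trans ((ladj_gc hg _ _).mpr le_rfl))
    · exact (ladj_gc hg _ _).mp (le_sup_right.trans ((ladj_gc hg _ _).mpr le_rfl))

end



/-- Let `M` be a finite idempotent commutative monoid, viewed as a lattice
`(M, ∨, ∧)` with `x ∨ y = x + y`, and let `M̃ = (M, ∧)` be the dual monoid.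
Then there is a bijective anti-homomorphism `Φ : End M → End M̃`,
`f ↦ f*` (given by `f*(φ) = φ ∘ f` under the identification of `M̃` with
`Hom(M, L₂)`): it is additive (`(f+g)* = f* + g*`, where addition is pointwise
`⊔` on `End M` and pointwise `⊓` on `End M̃`), sends the zero map to the zero
map, and reverses composition (`(f ∘ g)* = g* ∘ f*`).  Hence the semirings
`End M` and `End M̃` are anti-isomorphic. -/
theorem end_anti_isomorphic_to_end_dual {M : Type} [Lattice M] [BoundedOrder M]
    [Fintype M] :
    ∃ Φ : {f : M → M // SupEnd f} → {g : M → M // InfEnd g},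
      Function.Bijective Φ ∧
      -- additive: `(f + g)* = f* + g*`
      (∀ f g h : {f : M → M // SupEnd f},
        (∀ x : M, h.1 x = f.1 x ⊔ g.1 x) →
        ∀ x : M, (Φ h).1 x = (Φ f).1 x ⊓ (Φ g).1 x) ∧
      -- `0* = 0`
      (∀ h : {f : M → M // SupEnd f},
        (∀ x : M, h.1 x = ⊥) → ∀ x : M, (Φ h).1 x = ⊤) ∧
      -- anti-multiplicative: `(f ∘ g)* = g* ∘ f*`
      (∀ f g h : {f : M → M // SupEnd f},
        (∀ x : M, h.1 x = f.1 (g.1 x)) →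
        ∀ x : M, (Φ h).1 x = (Φ g).1 ((Φ f).1 x)) := by

  refine ⟨fun f => ⟨radj f.1, radj_infEnd f.2⟩, ⟨?_, ?_⟩, ?_, ?_, ?_⟩
  · -- injective
    intro f₁ f₂ h
    have h' : radj f₁.1 = radj f₂.1 := congrArg Subtype.val h
    refine Subtype.ext (funext fun x => le_antisymm ?_ ?_)
    · exact (radj_gc f₁.2 x _).mpr (h' ▸ (radj_gc f₂.2 x (f₂.1 x)).mp le_rfl)
    · exact (radj_gc f₂.2 x _).mpr (h' ▸ (radj_gc f₁.2 x (f₁.1 x)).mp le_rfl)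
  · -- surjective
    intro g
    refine ⟨⟨ladj g.1, ladj_supEnd g.2⟩, Subtype.ext (funext fun y => ?_)⟩
    exact radj_unique (ladj_supEnd g.2) (fun x => (ladj_gc g.2 x y).symm)
  · -- additive
    intro f g h hh y
    refine radj_unique h.2 (fun x => ?_)
    rw [hh x, sup_le_iff, le_inf_iff,
      radj_gc f.2, radj_gc g.2]
  · -- zero
    intro h hh y
    refine radj_unique h.2 (fun x => ?_)
    simp [hh x]
  · -- anti-multiplicative
    intro f g h hh y
    refine radj_unique h.2 (fun x => ?_)
    rw [hh x, radj_gc f.2, radj_gc g.2]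
end
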